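/- arXiv:2212.06989 — 2 statements merged into one kernel-verified Lean document; each statement's English description precedes it below -/
import Mathlib

section
/- Let P be symmetric positive definite, H ∈ ℝⁿ, λ ∈ (0,1], L > 0, a := λ⁻¹HᵀPH·L⁻¹ + 1, and P' := λ⁻¹(P − a⁻¹λ⁻¹ (PH)(PH)ᵀ L⁻¹). Then P' is symmetric positive definite. -/
open Matrix

private lemma dot_symm {n : ℕ} {P : Matrix (Fin n) (Fin n) ℝ} (hP : P.IsHermitian)
    (x y : Fin n → ℝ) : x ⬝ᵥ P *ᵥ y = y ⬝ᵥ P *ᵥ x := by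
  have hPt : Pᵀ = P := by
    rw [← conjTranspose_eq_transpose_of_trivial]; exact hP
  rw [dotProduct_mulVec, ← mulVec_transpose, hPt, dotProduct_comm]

/-- The RLEKF covariance update
`P' = λ⁻¹(P − a⁻¹λ⁻¹ (PH)(PH)ᵀ L⁻¹)` with `a = λ⁻¹HᵀPH L⁻¹ + 1`
preserves symmetric positive definiteness. -/
theorem stmt_4 {n : ℕ} (P : Matrix (Fin n) (Fin n) ℝ) (hP : P.PosDef)
    (H : Fin n → ℝ) (lam L : ℝ) (hlam : 0 < lam) (hlam' : lam ≤ 1) (hL : 0 < L)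
    (a : ℝ) (ha : a = lam⁻¹ * (H ⬝ᵥ (P *ᵥ H)) * L⁻¹ + 1)
    (P' : Matrix (Fin n) (Fin n) ℝ)
    (hP' : P' = lam⁻¹ • (P - (a⁻¹ * lam⁻¹ * L⁻¹) • vecMulVec (P *ᵥ H) (P *ᵥ H))) :
    P'.PosDef := by
  have hsym := hP.1
  set v : Fin n → ℝ := P *ᵥ H with hv
  set h2 : ℝ := H ⬝ᵥ P *ᵥ H with hh2
  have hh2nonneg : 0 ≤ h2 := by
    by_cases hH : H = 0
    · simp [hh2, hH]
    · exact le_of_lt (by simpa using hP.dotProduct_mulVec_pos hH)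
  have hapos : 0 < a := by
    rw [ha]
    have : 0 ≤ lam⁻¹ * h2 * L⁻¹ := by positivity
    linarith
  have hc : 0 ≤ a⁻¹ * lam⁻¹ * L⁻¹ := by positivity
  -- Cauchy-Schwarz: (x ⬝ᵥ P *ᵥ H)^2 ≤ (x ⬝ᵥ P *ᵥ x) * h2
  have CS : ∀ x : Fin n → ℝ, (x ⬝ᵥ P *ᵥ H)^2 ≤ (x ⬝ᵥ P *ᵥ x) * h2 := by
    intro x
    by_cases hH : H = 0
    · have hxnn : 0 ≤ x ⬝ᵥ P *ᵥ x := by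
        by_cases hx0 : x = 0
        · simp [hx0]
        · exact le_of_lt (by simpa using hP.dotProduct_mulVec_pos hx0)
      have : (x ⬝ᵥ P *ᵥ H) ^ 2 = 0 := by simp [hH]
      rw [this]
      exact mul_nonneg hxnn hh2nonneg
    have hh2pos : 0 < h2 := by simpa using hP.dotProduct_mulVec_pos hH
    set t : ℝ := (x ⬝ᵥ P *ᵥ H) / h2 with ht
    have key : 0 ≤ (x - t • H) ⬝ᵥ P *ᵥ (x - t • H) := by
      by_cases hz : x - t • H = 0
      · simp [hz]
      · exact le_of_lt (by simpa using hP.dotProduct_mulVec_pos hz)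
    have expand : (x - t • H) ⬝ᵥ P *ᵥ (x - t • H)
        = x ⬝ᵥ P *ᵥ x - 2 * t * (x ⬝ᵥ P *ᵥ H) + t^2 * h2 := by
      have hsymm : H ⬝ᵥ P *ᵥ x = x ⬝ᵥ P *ᵥ H := dot_symm hsym H x
      simp only [sub_dotProduct, dotProduct_sub, mulVec_sub, mulVec_smul,
        smul_dotProduct, dotProduct_smul, smul_eq_mul, hh2]
      rw [hsymm]; ring
    rw [expand] at key
    have hrw : (x ⬝ᵥ P *ᵥ H)^2 = (2 * t * (x ⬝ᵥ P *ᵥ H) - t^2 * h2) * h2 := by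
      rw [ht]; field_simp; ring
    rw [hrw]
    exact mul_le_mul_of_nonneg_right (by linarith) hh2pos.le
  have hvv : (vecMulVec v v).IsHermitian := by
    ext i j
    simp [conjTranspose_apply, vecMulVec_apply, mul_comm]
  refine PosDef.of_dotProduct_mulVec_pos ?_ ?_
  · rw [hP']
    show _ᴴ = _
    rw [conjTranspose_smul, conjTranspose_sub, conjTranspose_smul, hsym.eq, hvv.eq]
    simp
  · intro x hx
    have hs : 0 < x ⬝ᵥ P *ᵥ x := by simpa using hP.dotProduct_mulVec_pos hx
    have hval : star x ⬝ᵥ P' *ᵥ x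
        = lam⁻¹ * (x ⬝ᵥ P *ᵥ x - (a⁻¹ * lam⁻¹ * L⁻¹) * (x ⬝ᵥ P *ᵥ H)^2) := by
      rw [hP']
      have hmv : vecMulVec v v *ᵥ x = (v ⬝ᵥ x) • v := by
        ext i
        simp only [mulVec, vecMulVec_apply, dotProduct, Pi.smul_apply, smul_eq_mul]
        rw [Finset.sum_mul]
        exact Finset.sum_congr rfl fun j _ => by ring
      have hxv : v ⬝ᵥ x = x ⬝ᵥ P *ᵥ H := by
        rw [hv, dotProduct_comm]
      simp only [star_trivial, smul_mulVec, sub_mulVec, hmv,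
        dotProduct_smul, dotProduct_sub, smul_eq_mul, hxv]
      rw [← hxv, hv, dotProduct_comm]
      ring
    rw [hval]
    have hcu : (a⁻¹ * lam⁻¹ * L⁻¹) * (x ⬝ᵥ P *ᵥ H)^2
        ≤ (a⁻¹ * lam⁻¹ * L⁻¹) * ((x ⬝ᵥ P *ᵥ x) * h2) :=
      mul_le_mul_of_nonneg_left (CS x) hc
    have hfrac : (a⁻¹ * lam⁻¹ * L⁻¹) * h2 = (a - 1) / a := by
      rw [ha]; field_simp; ring
    have hlt : (a⁻¹ * lam⁻¹ * L⁻¹) * ((x ⬝ᵥ P *ᵥ x) * h2) < x ⬝ᵥ P *ᵥ x := by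
      have heq : (a⁻¹ * lam⁻¹ * L⁻¹) * ((x ⬝ᵥ P *ᵥ x) * h2)
          = (x ⬝ᵥ P *ᵥ x) * ((a - 1) / a) := by rw [← hfrac]; ring
      rw [heq]
      have h1 : (a - 1) / a < 1 := by
        rw [div_lt_one hapos]; linarith
      nlinarith [hs]
    have hpos : 0 < x ⬝ᵥ P *ᵥ x - (a⁻¹ * lam⁻¹ * L⁻¹) * (x ⬝ᵥ P *ᵥ H)^2 := by linarith
    positivity
end

section
/- Let H_1, H_2, ... be i.i.d. random vectors in ℝⁿ with i.i.d. mean-0, variance-σ² components, let λ_t = 1 − (1−λ₁)ν^(t−1) with λ₁ ∈ (0,1), ν ∈ (0,1), α_t² = ∏_{i=1}^t λ_i, and S(t) = ∑_{k=1}^t α_k²/α_t². Then (1/S(t)) · α_t² ∑_{i=1}^{t} α_i⁻² H_i H_iᵀ converges almost surely to σ² I as t → ∞. -/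
open Filter Finset MeasureTheory ProbabilityTheory


lemma toeplitz_zero (c b : ℕ → ℝ) (hc0 : ∀ i, 0 ≤ c i) (hb0 : ∀ i, 0 ≤ b i)
    (hc : Tendsto c atTop (nhds 0)) (M : ℝ)
    (hM : ∀ᶠ t : ℕ in atTop, (t:ℝ)⁻¹ * ∑ i ∈ Finset.Icc 1 t, b i ≤ M) :
    Tendsto (fun t : ℕ => (t:ℝ)⁻¹ * ∑ i ∈ Finset.Icc 1 t, c i * b i) atTop (nhds 0) := by
  have hM0 : 0 ≤ M := by
    obtain ⟨t, htM, ht1⟩ := (hM.and (eventually_ge_atTop 1)).exists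
    refine le_trans ?_ htM
    exact mul_nonneg (by positivity) (Finset.sum_nonneg fun i _ => hb0 i)
  rw [NormedAddCommGroup.tendsto_nhds_zero]
  intro ε hε
  set δ := ε / (2 * (M + 1)) with hδdef
  have hδpos : 0 < δ := by positivity
  obtain ⟨N, hN⟩ := eventually_atTop.1 (hc.eventually (gt_mem_nhds hδpos))
  have hC0 : Tendsto (fun t : ℕ => (∑ i ∈ Finset.Icc 1 N, c i * b i) * (t:ℝ)⁻¹)
      atTop (nhds 0) := by
    simpa using tendsto_inv_atTop_nhds_zero_nat.const_mul
      (∑ i ∈ Finset.Icc 1 N, c i * b i)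
  filter_upwards [hM, eventually_ge_atTop N, eventually_ge_atTop 1,
      hC0.eventually (gt_mem_nhds (half_pos hε))] with t htM htN ht1 htC0
  have htpos : (0:ℝ) < t := by exact_mod_cast ht1
  have hIcc : ∀ u : ℕ, Finset.Icc 1 u = Finset.Ioc 0 u := fun u => Finset.Icc_add_one_left_eq_Ioc 0 u
  have hsplit : ∑ i ∈ Finset.Ioc 0 N, c i * b i + ∑ i ∈ Finset.Ioc N t, c i * b i
      = ∑ i ∈ Finset.Ioc 0 t, c i * b i :=
    Finset.sum_Ioc_consecutive _ (Nat.zero_le N) htN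
  have h2 : ∑ i ∈ Finset.Ioc N t, c i * b i ≤ δ * ∑ i ∈ Finset.Ioc 0 t, b i := by
    calc ∑ i ∈ Finset.Ioc N t, c i * b i ≤ ∑ i ∈ Finset.Ioc N t, δ * b i := by
          refine Finset.sum_le_sum fun i hi => ?_
          exact mul_le_mul_of_nonneg_right (le_of_lt (hN i (le_of_lt (Finset.mem_Ioc.1 hi).1))) (hb0 i)
      _ = δ * ∑ i ∈ Finset.Ioc N t, b i := by rw [Finset.mul_sum]
      _ ≤ δ * ∑ i ∈ Finset.Ioc 0 t, b i := by
          refine mul_le_mul_of_nonneg_left ?_ hδpos.le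
          refine Finset.sum_le_sum_of_subset_of_nonneg ?_ (fun i _ _ => hb0 i)
          exact Finset.Ioc_subset_Ioc (Nat.zero_le N) le_rfl
  have hnonneg : 0 ≤ (t:ℝ)⁻¹ * ∑ i ∈ Finset.Icc 1 t, c i * b i :=
    mul_nonneg (by positivity) (Finset.sum_nonneg fun i _ => mul_nonneg (hc0 i) (hb0 i))
  rw [Real.norm_eq_abs, abs_of_nonneg hnonneg]
  have key : (t:ℝ)⁻¹ * ∑ i ∈ Finset.Icc 1 t, c i * b i
      ≤ (∑ i ∈ Finset.Icc 1 N, c i * b i) * (t:ℝ)⁻¹ + δ * ((t:ℝ)⁻¹ * ∑ i ∈ Finset.Icc 1 t, b i) := by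
    rw [hIcc t, hIcc N, ← hsplit]
    have : (t:ℝ)⁻¹ * (∑ i ∈ Finset.Ioc 0 N, c i * b i + ∑ i ∈ Finset.Ioc N t, c i * b i)
        ≤ (t:ℝ)⁻¹ * (∑ i ∈ Finset.Ioc 0 N, c i * b i + δ * ∑ i ∈ Finset.Ioc 0 t, b i) := by
      refine mul_le_mul_of_nonneg_left (by linarith) (by positivity)
    calc (t:ℝ)⁻¹ * (∑ i ∈ Finset.Ioc 0 N, c i * b i + ∑ i ∈ Finset.Ioc N t, c i * b i)
        ≤ (t:ℝ)⁻¹ * (∑ i ∈ Finset.Ioc 0 N, c i * b i + δ * ∑ i ∈ Finset.Ioc 0 t, b i) := this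
      _ = (∑ i ∈ Finset.Ioc 0 N, c i * b i) * (t:ℝ)⁻¹ + δ * ((t:ℝ)⁻¹ * ∑ i ∈ Finset.Ioc 0 t, b i) := by ring
  have hb_nonneg : 0 ≤ (t:ℝ)⁻¹ * ∑ i ∈ Finset.Icc 1 t, b i :=
    mul_nonneg (by positivity) (Finset.sum_nonneg fun i _ => hb0 i)
  have h3 : δ * ((t:ℝ)⁻¹ * ∑ i ∈ Finset.Icc 1 t, b i) ≤ δ * (M + 1) := by
    refine mul_le_mul_of_nonneg_left (le_trans htM (by linarith)) hδpos.le
  have h4 : δ * (M + 1) = ε / 2 := by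
    rw [hδdef]; field_simp
  linarith [key, h3, htC0]



lemma cesaro_Icc {u : ℕ → ℝ} {l : ℝ} (h : Tendsto u atTop (nhds l)) :
    Tendsto (fun t : ℕ => (t:ℝ)⁻¹ * ∑ i ∈ Finset.Icc 1 t, u i) atTop (nhds l) := by
  have h' : Tendsto (fun i : ℕ => u (1 + i)) atTop (nhds l) := by
    apply h.comp
    exact tendsto_atTop_atTop_of_monotone (fun x y hxy => by omega) (fun x => ⟨x, by omega⟩)
  have := h'.cesaro
  refine this.congr fun t => ?_
  congr 1
  rw [show Finset.Icc 1 t = Finset.Ico 1 (t+1) from (Finset.Ico_add_one_right_eq_Icc 1 t),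
    Finset.sum_Ico_eq_sum_range]
  simp

lemma det_main (a b : ℕ → ℝ) (hb0 : ∀ i, 0 ≤ b i) (hab : ∀ i, |a i| ≤ b i)
    (μ L : ℝ)
    (ha : Tendsto (fun t : ℕ => (t:ℝ)⁻¹ * ∑ i ∈ Finset.Icc 1 t, a i) atTop (nhds μ))
    (hbL : Tendsto (fun t : ℕ => (t:ℝ)⁻¹ * ∑ i ∈ Finset.Icc 1 t, b i) atTop (nhds L))
    (α2 : ℕ → ℝ) (hpos : ∀ i, 0 < α2 i) (αi : ℝ) (hαi : 0 < αi)
    (hconv : Tendsto α2 atTop (nhds αi))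
    (S : ℕ → ℝ) (hS : ∀ t, S t = ∑ k ∈ Finset.Icc 1 t, α2 k / α2 t) :
    Tendsto (fun t : ℕ => (1 / S t) * α2 t * ∑ i ∈ Finset.Icc 1 t, (α2 i)⁻¹ * a i)
      atTop (nhds μ) := by
  set c : ℕ → ℝ := fun i => (α2 i)⁻¹ - αi⁻¹ with hcdef
  have hcinv : Tendsto (fun i => (α2 i)⁻¹) atTop (nhds αi⁻¹) := hconv.inv₀ hαi.ne'
  have hc : Tendsto c atTop (nhds 0) := by
    simpa using hcinv.sub_const αi⁻¹
  have hcabs : Tendsto (fun i => |c i|) atTop (nhds 0) := by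
    simpa using hc.abs
  have hMev : ∀ᶠ t : ℕ in atTop, (t:ℝ)⁻¹ * ∑ i ∈ Finset.Icc 1 t, b i ≤ |L| + 1 :=
    hbL.eventually_le_const (lt_of_le_of_lt (le_abs_self L) (by linarith))
  have step1 : Tendsto (fun t : ℕ => (t:ℝ)⁻¹ * ∑ i ∈ Finset.Icc 1 t, c i * a i)
      atTop (nhds 0) := by
    have h0 := toeplitz_zero (fun i => |c i|) b (fun i => abs_nonneg _) hb0 hcabs (|L| + 1) hMev
    refine squeeze_zero_norm (fun t => ?_) h0
    rw [Real.norm_eq_abs, abs_mul, abs_inv, Nat.abs_cast]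
    refine mul_le_mul_of_nonneg_left ?_ (by positivity)
    refine le_trans (Finset.abs_sum_le_sum_abs _ _) (Finset.sum_le_sum fun i _ => ?_)
    rw [abs_mul]
    exact mul_le_mul_of_nonneg_left (hab i) (abs_nonneg _)
  have step2 : Tendsto (fun t : ℕ => (t:ℝ)⁻¹ * ∑ i ∈ Finset.Icc 1 t, (α2 i)⁻¹ * a i)
      atTop (nhds (αi⁻¹ * μ)) := by
    have heq : ∀ t : ℕ, (t:ℝ)⁻¹ * ∑ i ∈ Finset.Icc 1 t, (α2 i)⁻¹ * a i
        = αi⁻¹ * ((t:ℝ)⁻¹ * ∑ i ∈ Finset.Icc 1 t, a i)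
          + (t:ℝ)⁻¹ * ∑ i ∈ Finset.Icc 1 t, c i * a i := by
      intro t
      have : ∀ i, (α2 i)⁻¹ * a i = αi⁻¹ * a i + c i * a i := by
        intro i; rw [hcdef]; ring
      simp only [this, Finset.sum_add_distrib, ← Finset.mul_sum]
      ring
    rw [show αi⁻¹ * μ = αi⁻¹ * μ + 0 by ring]
    exact Tendsto.congr (fun t => (heq t).symm) ((ha.const_mul αi⁻¹).add step1)
  have step3 : Tendsto (fun t : ℕ => (t:ℝ)⁻¹ * S t) atTop (nhds 1) := by
    have h1 : Tendsto (fun t : ℕ => ((t:ℝ)⁻¹ * ∑ k ∈ Finset.Icc 1 t, α2 k) * (α2 t)⁻¹)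
        atTop (nhds (αi * αi⁻¹)) := (cesaro_Icc hconv).mul hcinv
    rw [mul_inv_cancel₀ hαi.ne'] at h1
    refine h1.congr fun t => ?_
    rw [hS t, ← Finset.sum_div, div_eq_mul_inv]; ring
  have step4 : Tendsto (fun t : ℕ => ((t:ℝ)⁻¹ * S t)⁻¹) atTop (nhds 1) := by
    simpa using step3.inv₀ one_ne_zero
  have final := (step4.mul hconv).mul step2
  have hlim : 1 * αi * (αi⁻¹ * μ) = μ := by field_simp
  rw [hlim] at final
  refine final.congr' ?_
  filter_upwards [eventually_ge_atTop 1] with t ht1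
  have htpos : (0:ℝ) < t := by exact_mod_cast ht1
  rw [mul_inv, inv_inv, one_div,
    show (↑t:ℝ) * (S t)⁻¹ * α2 t * ((↑t:ℝ)⁻¹ * (∑ i ∈ Finset.Icc 1 t, (α2 i)⁻¹ * a i))
      = ((↑t:ℝ) * (↑t:ℝ)⁻¹) * ((S t)⁻¹ * α2 t * ∑ i ∈ Finset.Icc 1 t, (α2 i)⁻¹ * a i) from by ring,
    mul_inv_cancel₀ htpos.ne', one_mul]


lemma alpha_facts (lam1 ν : ℝ) (h1 : 0 < lam1) (h1' : lam1 < 1) (hν : 0 < ν) (hν' : ν < 1)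
    (α2 : ℕ → ℝ)
    (hα2 : ∀ t : ℕ, α2 t = ∏ i ∈ Finset.Icc 1 t, (1 - (1 - lam1) * ν ^ (i - 1))) :
    (∀ t, 0 < α2 t) ∧ ∃ αi : ℝ, 0 < αi ∧ Tendsto α2 atTop (nhds αi) := by
  set f : ℕ → ℝ := fun i => 1 - (1 - lam1) * ν ^ (i - 1) with hf
  have hx0 : ∀ i : ℕ, 0 ≤ (1 - lam1) * ν ^ (i - 1) :=
    fun i => mul_nonneg (by linarith) (pow_nonneg hν.le _)
  have hx1 : ∀ i : ℕ, (1 - lam1) * ν ^ (i - 1) ≤ 1 - lam1 := by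
    intro i
    have h := pow_le_one₀ hν.le hν'.le (n := i - 1)
    nlinarith
  have hflb : ∀ i, lam1 ≤ f i := fun i => by have := hx1 i; simp only [hf]; linarith
  have hfub : ∀ i, f i ≤ 1 := fun i => by have := hx0 i; simp only [hf]; linarith
  have hfpos : ∀ i, 0 < f i := fun i => lt_of_lt_of_le h1 (hflb i)
  have hpos : ∀ t, 0 < α2 t := by
    intro t; rw [hα2]; exact Finset.prod_pos fun i _ => hfpos i
  refine ⟨hpos, ?_⟩
  have hexp : ∀ i : ℕ, Real.exp (-((1 - lam1) * ν ^ (i - 1) / lam1)) ≤ f i := by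
    intro i
    set x := (1 - lam1) * ν ^ (i - 1) with hxdef
    have hx0' : 0 ≤ x := hx0 i
    have hx1' : x ≤ 1 - lam1 := hx1 i
    have hexp1 : x / lam1 + 1 ≤ Real.exp (x / lam1) := Real.add_one_le_exp _
    have hepos : 0 < Real.exp (x / lam1) := Real.exp_pos _
    rw [Real.exp_neg]
    rw [inv_le_iff_one_le_mul₀ hepos]
    have hkey : 1 ≤ (1 + x / lam1) * (1 - x) := by
      have h2 : 0 ≤ x * (1 - lam1 - x) := mul_nonneg hx0' (by linarith)
      rw [← sub_nonneg]
      have : (1 + x / lam1) * (1 - x) - 1 = (x * (1 - lam1 - x)) / lam1 := by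
        field_simp; ring
      rw [this]
      positivity
    have hfx : f i = 1 - x := rfl
    calc (1:ℝ) ≤ (1 + x / lam1) * (1 - x) := hkey
      _ ≤ Real.exp (x / lam1) * (1 - x) := by nlinarith
      _ = f i * Real.exp (x / lam1) := by rw [hfx]; ring
  -- lower bound on products
  set K : ℝ := (1 - lam1) / (lam1 * (1 - ν)) with hK
  have hlb : ∀ t : ℕ, Real.exp (-K) ≤ α2 t := by
    intro t
    have hsum : ∑ i ∈ Finset.Icc 1 t, (1 - lam1) * ν ^ (i - 1) / lam1 ≤ K := by
      have hgeom : ∑ i ∈ Finset.Icc 1 t, ν ^ (i - 1) ≤ (1 - ν)⁻¹ := by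
        have hre : ∑ i ∈ Finset.Icc 1 t, ν ^ (i - 1) = ∑ i ∈ Finset.range t, ν ^ i := by
          rw [show Finset.Icc 1 t = Finset.Ico 1 (t+1) from (Finset.Ico_add_one_right_eq_Icc 1 t),
            Finset.sum_Ico_eq_sum_range]
          simp
        rw [hre]
        exact ((summable_geometric_of_lt_one hν.le hν').sum_le_tsum (Finset.range t)
          (fun i _ => by positivity)).trans_eq
          (tsum_geometric_of_lt_one hν.le hν')
      have hsum2 : ∑ i ∈ Finset.Icc 1 t, (1 - lam1) * ν ^ (i - 1) / lam1
          = ((1 - lam1) / lam1) * ∑ i ∈ Finset.Icc 1 t, ν ^ (i - 1) := by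
        rw [Finset.mul_sum]
        exact Finset.sum_congr rfl fun i _ => by ring
      rw [hsum2, hK]
      have hcoef : 0 ≤ (1 - lam1) / lam1 := div_nonneg (by linarith) h1.le
      calc ((1 - lam1) / lam1) * ∑ i ∈ Finset.Icc 1 t, ν ^ (i - 1)
          ≤ ((1 - lam1) / lam1) * (1 - ν)⁻¹ := mul_le_mul_of_nonneg_left hgeom hcoef
        _ = (1 - lam1) / (lam1 * (1 - ν)) := by field_simp
    calc Real.exp (-K) ≤ Real.exp (-(∑ i ∈ Finset.Icc 1 t, (1 - lam1) * ν ^ (i - 1) / lam1)) := by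
          apply Real.exp_le_exp.2; linarith
      _ = ∏ i ∈ Finset.Icc 1 t, Real.exp (-((1 - lam1) * ν ^ (i - 1) / lam1)) := by
          rw [← Real.exp_sum, Finset.sum_neg_distrib]
      _ ≤ ∏ i ∈ Finset.Icc 1 t, f i :=
          Finset.prod_le_prod (fun i _ => (Real.exp_pos _).le) (fun i _ => hexp i)
      _ = α2 t := (hα2 t).symm
  have hanti : Antitone α2 := by
    apply antitone_nat_of_succ_le
    intro t
    have : α2 (t + 1) = α2 t * f (t + 1) := by
      rw [hα2, hα2, Finset.prod_Icc_succ_top (by omega)]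
    rw [this]
    nlinarith [hpos t, hfub (t+1), hfpos (t+1)]
  have hbdd : BddBelow (Set.range α2) := ⟨Real.exp (-K), fun x ⟨t, ht⟩ => ht ▸ hlb t⟩
  refine ⟨⨅ t, α2 t, ?_, tendsto_atTop_ciInf hanti hbdd⟩
  exact lt_of_lt_of_le (Real.exp_pos _) (le_ciInf hlb)


lemma iIndepFun_congr_ae {ι Ω β : Type*} [MeasurableSpace Ω] {μ : Measure Ω}
    [mβ : MeasurableSpace β] {f g : ι → Ω → β} (hfg : ∀ i, f i =ᵐ[μ] g i)
    (h : iIndepFun f μ) : iIndepFun g μ := by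
  classical
  rw [iIndepFun_iff] at h ⊢
  intro s f' H
  have H2 : ∀ i, ∃ A : Set β, i ∈ s → MeasurableSet A ∧ g i ⁻¹' A = f' i := by
    intro i
    by_cases hi : i ∈ s
    · obtain ⟨A, hA1, hA2⟩ := MeasurableSpace.measurableSet_comap.1 (H i hi)
      exact ⟨A, fun _ => ⟨hA1, hA2⟩⟩
    · exact ⟨∅, fun hc => absurd hc hi⟩
  choose A hA using H2
  have haeq : ∀ i ∈ s, (f i ⁻¹' A i : Set Ω) =ᵐ[μ] f' i := by
    intro i hi
    rw [← (hA i hi).2, Filter.eventuallyEq_set]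
    filter_upwards [hfg i] with ω hω
    simp [Set.mem_preimage, hω]
  have key1 : μ (⋂ i ∈ s, f' i) = μ (⋂ i ∈ s, f i ⁻¹' A i) := by
    apply measure_congr
    have hall : ∀ᵐ ω ∂μ, ∀ i ∈ (s : Set ι), f i ω = g i ω := by
      rw [MeasureTheory.ae_ball_iff s.countable_toSet]
      exact fun i _ => hfg i
    rw [Filter.eventuallyEq_set]
    filter_upwards [hall] with ω hω
    simp only [Set.mem_iInter, Set.mem_preimage]
    constructor
    · intro hω' i hi
      rw [hω i hi]
      rw [← Set.mem_preimage, (hA i hi).2]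
      exact hω' i hi
    · intro hω' i hi
      rw [← (hA i hi).2, Set.mem_preimage, ← hω i hi]
      exact hω' i hi
  rw [key1, h s (fun i hi => MeasurableSpace.measurableSet_comap.2 ⟨A i, (hA i hi).1, rfl⟩)]
  exact Finset.prod_congr rfl fun i hi => measure_congr (haeq i hi)


/-- Weighted strong law of large numbers for the RLEKF weights:
with `λ_t = 1 − (1−λ₁)ν^(t−1)`, `α_t² = ∏_{i=1}^t λ_i`, `S(t) = ∑_{k=1}^t α_k²/α_t²`,
and `H_i` i.i.d. mean-0 variance-σ² components,
`(1/S(t)) α_t² ∑_{i=1}^t α_i⁻² H_i H_iᵀ → σ² I` almost surely, entrywise. -/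
theorem stmt_7 {Ω : Type*} [MeasureSpace Ω] [IsProbabilityMeasure (ℙ : Measure Ω)]
    {n : ℕ} (Y : ℕ → Fin n → Ω → ℝ) (σ : ℝ) (hσ : 0 < σ)
    (hindep : iIndepFun
      (fun p : ℕ × Fin n => Y p.1 p.2) ℙ)
    (hident : ∀ p q : ℕ × Fin n, IdentDistrib (Y p.1 p.2) (Y q.1 q.2) ℙ ℙ)
    (hint : ∀ i j, Integrable (Y i j) ℙ)
    (hmean : ∀ i j, ∫ ω, Y i j ω ∂ℙ = 0)
    (hsq : ∀ i j, Integrable (fun ω => (Y i j ω) ^ 2) ℙ)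
    (hvar : ∀ i j, ∫ ω, (Y i j ω) ^ 2 ∂ℙ = σ ^ 2)
    (lam1 ν : ℝ) (h1 : 0 < lam1) (h1' : lam1 < 1) (hν : 0 < ν) (hν' : ν < 1)
    (α2 : ℕ → ℝ)
    (hα2 : ∀ t : ℕ, α2 t = ∏ i ∈ Finset.Icc 1 t, (1 - (1 - lam1) * ν ^ (i - 1)))
    (S : ℕ → ℝ)
    (hS : ∀ t : ℕ, S t = ∑ k ∈ Finset.Icc 1 t, α2 k / α2 t) :
    ∀ᵐ ω ∂(ℙ : Measure Ω), ∀ j k : Fin n,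
      Tendsto (fun t : ℕ =>
          (1 / S t) * α2 t *
            ∑ i ∈ Finset.Icc 1 t, (α2 i)⁻¹ * (Y i j ω * Y i k ω))
        atTop (nhds (if j = k then σ ^ 2 else 0)) := by
  classical
  have hZex : ∀ p : ℕ × Fin n, ∃ Zp : Ω → ℝ, Measurable Zp ∧ Y p.1 p.2 =ᵐ[ℙ] Zp := by
    intro p
    obtain ⟨Zp, hm, he⟩ := (hint p.1 p.2).1
    exact ⟨Zp, hm.measurable, he⟩
  choose Z hZmeas hZae using hZex
  have hZindep : iIndepFun Z ℙ :=
    iIndepFun_congr_ae (fun p => hZae p) hindep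
  have hZident : ∀ p q : ℕ × Fin n, IdentDistrib (Z p) (Z q) ℙ ℙ := by
    intro p q
    exact ((IdentDistrib.of_ae_eq (hint p.1 p.2).aemeasurable (hZae p)).symm.trans
      (hident p q)).trans (IdentDistrib.of_ae_eq (hint q.1 q.2).aemeasurable (hZae q))
  have hZint : ∀ p : ℕ × Fin n, Integrable (Z p) ℙ := fun p => (hint p.1 p.2).congr (hZae p)
  obtain ⟨hpos, αi, hαi, hconv⟩ := alpha_facts lam1 ν h1 h1' hν hν' α2 hα2
  rw [ae_all_iff]
  intro j
  rw [ae_all_iff]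
  intro k
  set P : ℕ → Ω → ℝ × ℝ := fun i ω => (Z (i, j) ω, Z (i, k) ω) with hP
  have hPmeas : ∀ i, Measurable (P i) := fun i => (hZmeas _).prodMk (hZmeas _)
  have pairIndep : ∀ i i' : ℕ, i ≠ i' → IndepFun (P i) (P i') ℙ := by
    intro i i' hne
    exact hZindep.indepFun_prodMk_prodMk hZmeas (i,j) (i,k) (i',j) (i',k)
      (by simp [Prod.ext_iff, hne]) (by simp [Prod.ext_iff, hne])
      (by simp [Prod.ext_iff, hne]) (by simp [Prod.ext_iff, hne])
  have pairIdent : ∀ i i' : ℕ, IdentDistrib (P i) (P i') ℙ ℙ := by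
    intro i i'
    by_cases hjk : j = k
    · subst hjk
      have hdiag : ∀ m : ℕ, P m = (fun x : ℝ => (x, x)) ∘ (Z (m, j)) := fun m => rfl
      rw [hdiag i, hdiag i']
      exact (hZident (i,j) (i',j)).comp (measurable_id.prodMk measurable_id)
    · have hind1 : IndepFun (Z (i,j)) (Z (i,k)) ℙ :=
        hZindep.indepFun (by simp [Prod.ext_iff, hjk])
      have hind2 : IndepFun (Z (i',j)) (Z (i',k)) ℙ :=
        hZindep.indepFun (by simp [Prod.ext_iff, hjk])
      refine ⟨(hPmeas i).aemeasurable, (hPmeas i').aemeasurable, ?_⟩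
      show Measure.map (fun ω => (Z (i,j) ω, Z (i,k) ω)) ℙ
        = Measure.map (fun ω => (Z (i',j) ω, Z (i',k) ω)) ℙ
      rw [(indepFun_iff_map_prod_eq_prod_map_map (hZmeas _).aemeasurable
            (hZmeas _).aemeasurable).1 hind1,
          (indepFun_iff_map_prod_eq_prod_map_map (hZmeas _).aemeasurable
            (hZmeas _).aemeasurable).1 hind2,
          (hZident (i,j) (i',j)).map_eq, (hZident (i,k) (i',k)).map_eq]
  set X : ℕ → Ω → ℝ := fun m ω => Z (m+1, j) ω * Z (m+1, k) ω with hX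
  have hmul : Measurable (fun x : ℝ × ℝ => x.1 * x.2) := measurable_fst.mul measurable_snd
  have habs : Measurable (fun x : ℝ × ℝ => |x.1 * x.2|) := hmul.abs
  have hXc : ∀ m, X m = (fun x : ℝ × ℝ => x.1 * x.2) ∘ P (m+1) := fun m => rfl
  have hXac : ∀ m, (fun ω => |X m ω|) = (fun x : ℝ × ℝ => |x.1 * x.2|) ∘ P (m+1) :=
    fun m => rfl
  have Xindep : Pairwise (Function.onFun (fun x y => IndepFun x y ℙ) X) := by
    intro m m' hne
    have := (pairIndep (m+1) (m'+1) (by omega)).comp hmul hmul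
    rwa [Function.onFun, hXc m, hXc m']
  have XabsIndep : Pairwise (Function.onFun (fun x y => IndepFun x y ℙ) (fun m ω => |X m ω|)) := by
    intro m m' hne
    have := (pairIndep (m+1) (m'+1) (by omega)).comp habs habs
    rwa [Function.onFun, hXac m, hXac m']
  have Xident : ∀ m, IdentDistrib (X m) (X 0) ℙ ℙ := by
    intro m
    rw [hXc m, hXc 0]
    exact (pairIdent (m+1) 1).comp hmul
  have XabsIdent : ∀ m, IdentDistrib (fun ω => |X m ω|) (fun ω => |X 0 ω|) ℙ ℙ := by
    intro m
    rw [hXac m, hXac 0]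
    exact (pairIdent (m+1) 1).comp habs
  have Xint : Integrable (X 0) ℙ := by
    by_cases hjk : j = k
    · subst hjk
      refine (hsq 1 j).congr ?_
      filter_upwards [hZae (1, j)] with ω hω
      simp only [hX, ← hω, sq]
    · have hind1 : IndepFun (Z (1,j)) (Z (1,k)) ℙ :=
        hZindep.indepFun (by simp [Prod.ext_iff, hjk])
      exact hind1.integrable_mul (hZint _) (hZint _)
  have XabsInt : Integrable (fun ω => |X 0 ω|) ℙ := Xint.abs
  have Xmean : ∫ ω, X 0 ω ∂ℙ = (if j = k then σ^2 else 0) := by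
    by_cases hjk : j = k
    · subst hjk
      simp only [if_pos rfl]
      have : (∫ ω, X 0 ω ∂ℙ) = ∫ ω, (Y 1 j ω)^2 ∂ℙ := by
        refine integral_congr_ae ?_
        filter_upwards [hZae (1,j)] with ω hω
        simp only [hX, ← hω, sq]
      rw [this]
      exact hvar 1 j
    · simp only [if_neg hjk]
      have hind1 : IndepFun (Z (1,j)) (Z (1,k)) ℙ :=
        hZindep.indepFun (by simp [Prod.ext_iff, hjk])
      have : (∫ ω, X 0 ω ∂ℙ) = (∫ ω, Z (1,j) ω ∂ℙ) * ∫ ω, Z (1,k) ω ∂ℙ :=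
        hind1.integral_mul_eq_mul_integral (hZint _).1 (hZint _).1
      rw [this]
      have e1 : ∫ ω, Z (1,j) ω ∂ℙ = 0 := by
        rw [← integral_congr_ae (hZae (1,j))]; exact hmean 1 j
      have e2 : ∫ ω, Z (1,k) ω ∂ℙ = 0 := by
        rw [← integral_congr_ae (hZae (1,k))]; exact hmean 1 k
      rw [e1, e2, mul_zero]
  have slln := strong_law_ae X Xint Xindep Xident
  have sllnAbs := strong_law_ae (fun m ω => |X m ω|) XabsInt XabsIndep XabsIdent
  have haeY : ∀ᵐ ω ∂(ℙ : Measure Ω), ∀ i : ℕ, Y i j ω = Z (i,j) ω ∧ Y i k ω = Z (i,k) ω := by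
    rw [ae_all_iff]
    exact fun i => ((hZae (i,j)).and (hZae (i,k)))
  filter_upwards [slln, sllnAbs, haeY] with ω h1ω h2ω h3ω
  have hsum : ∀ (t : ℕ) (u : ℕ → ℝ),
      ∑ i ∈ Finset.Icc 1 t, u i = ∑ i ∈ Finset.range t, u (i + 1) := by
    intro t u
    rw [show Finset.Icc 1 t = Finset.Ico 1 (t+1) from (Finset.Ico_add_one_right_eq_Icc 1 t),
      Finset.sum_Ico_eq_sum_range]
    simp [add_comm]
  rw [← Xmean]
  refine det_main (fun i => Y i j ω * Y i k ω) (fun i => |Y i j ω * Y i k ω|)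
    (fun i => abs_nonneg _) (fun i => le_refl _) _ (∫ ω', |X 0 ω'| ∂ℙ) ?_ ?_
    α2 hpos αi hαi hconv S hS
  · refine h1ω.congr fun t => ?_
    rw [smul_eq_mul, hsum t]
    congr 1
    refine Finset.sum_congr rfl fun i _ => ?_
    simp only [hX, (h3ω (i+1)).1, (h3ω (i+1)).2]
  · refine h2ω.congr fun t => ?_
    rw [smul_eq_mul, hsum t]
    congr 1
    refine Finset.sum_congr rfl fun i _ => ?_
    simp only [hX, (h3ω (i+1)).1, (h3ω (i+1)).2]
end
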